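/- arXiv:1602.06119 — 2 statements merged into one kernel-verified Lean document; each statement's English description precedes it below -/
import Mathlib

section
/- Key reduction for the (L^∞, ℓ¹) translation bound: there is a constant C > 0 (depending only on α) such that for every integer n ≥ 1 and every y ∈ ℝ₊ one has ‖τ_y 1_{[n−1,n)}‖_{∞,1} ≤ C·ω_n. -/
open MeasureTheory Real Set ENNReal ComplexOrder

noncomputable section

/-- The Haar measure `ω_α(dz) = z^(2α+1) dz` of the Bessel–Kingman hypergroup,
supported on `(0, ∞)`. -/
def omegaM (α : ℝ) : Measure ℝ :=
  (volume.restrict (Set.Ioi (0:ℝ))).withDensity fun z => ENNReal.ofReal (z ^ (2*α+1))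

/-- The interval `I_{n+1} = [n, n+1)` (0-based reindexing of the paper's `I_n = [n-1, n)`). -/
def In (n : ℕ) : Set ℝ := Set.Ico (n : ℝ) ((n : ℝ) + 1)

/-- `ω_α`-measure of the `n`-th interval. -/
def wn (α : ℝ) (n : ℕ) : ℝ≥0∞ := omegaM α (In n)

/-- The discrete amalgam norm `‖f‖_{p,q}` (with the conventions of the paper for
`p = ∞` or `q = ∞`, where the corresponding integral/sum becomes a supremum). -/
def amalgamNorm (α : ℝ) (p q : ℝ≥0∞) {E : Type*} [NormedAddCommGroup E] (f : ℝ → E) : ℝ≥0∞ :=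
  let A : ℕ → ℝ≥0∞ := fun n =>
    if p = ∞ then ⨆ x ∈ In n, (‖f x‖₊ : ℝ≥0∞)
    else ((wn α n)⁻¹ * ∫⁻ x in In n, (‖f x‖₊ : ℝ≥0∞) ^ p.toReal ∂(omegaM α)) ^ (1/p.toReal)
  if q = ∞ then ⨆ n, A n
  else (∑' n, wn α n * (A n) ^ q.toReal) ^ (1/q.toReal)

/-- The constant `C_Γ = Γ(α+1)/(Γ(1/2)·Γ(α+1/2)·2^(2α-1))`. -/
def CGamma (α : ℝ) : ℝ :=
  Real.Gamma (α+1) / (Real.Gamma (1/2) * Real.Gamma (α+1/2) * (2:ℝ) ^ (2*α-1))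

/-- The Bessel–Kingman kernel `K_α(x,y,z)`. -/
def Kker (α x y z : ℝ) : ℝ :=
  CGamma α * ((z^2 - (x-y)^2) * ((x+y)^2 - z^2)) ^ (α - 1/2) / (x*y*z) ^ (2*α)

/-- The hypergroup translation `τ_y f(x)`, with the conventions `τ_0 f = f` and
`τ_y f(0) = f(y)`. -/
def tau {E : Type*} [NormedAddCommGroup E] [NormedSpace ℝ E]
    (α y : ℝ) (f : ℝ → E) (x : ℝ) : E :=
  if y = 0 then f x
  else if x = 0 then f y
  else ∫ z in |x - y|..(x + y), (Kker α x y z * z ^ (2*α+1)) • f z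

/-- The hypergroup convolution `(f ⊛ g)(x) = ∫_0^∞ f(y)·τ_y g(x)·y^(2α+1) dy`. -/
def convBK (α : ℝ) (f g : ℝ → ℂ) (x : ℝ) : ℂ :=
  ∫ y in Set.Ioi (0:ℝ), (y ^ (2*α+1)) • (f y * tau α y g x)

/-- The modified Bessel function `j_α`. -/
def jBessel (α x : ℝ) : ℝ :=
  ∑' k : ℕ, (-1)^k * Real.Gamma (α+1) / (2^(2*k) * (k.factorial : ℝ) * Real.Gamma (α + k + 1))
    * x^(2*k)

/-- The hypergroup Fourier transform `f̂(λ) = ∫_0^∞ f(x)·j_α(λx)·x^(2α+1) dx`. -/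
def fourierBK (α : ℝ) (f : ℝ → ℂ) (lam : ℝ) : ℂ :=
  ∫ x in Set.Ioi (0:ℝ), (jBessel α (lam * x) * x ^ (2*α+1)) • f x

/-- The continuous `(p,∞)`-amalgam norm
`sup_{y ≥ 0} (∫_0^∞ |f(x)|^p · τ_y 1_{[0,1]}(x) · x^(2α+1) dx)^(1/p)`. -/
def contNorm (α p : ℝ) {E : Type*} [NormedAddCommGroup E] (f : ℝ → E) : ℝ≥0∞ :=
  ⨆ y ∈ Set.Ici (0:ℝ),
    (∫⁻ x, (‖f x‖₊ : ℝ≥0∞) ^ p *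
        ENNReal.ofReal (tau α y ((Set.Icc (0:ℝ) 1).indicator 1) x) ∂(omegaM α)) ^ (1/p)

/-- The weight `ω_n = ∫_{n-1}^{n} z^(2α+1) dz`, as a real number. -/
def wIn (α : ℝ) (n : ℕ) : ℝ := ∫ z in ((n:ℝ)-1)..(n:ℝ), z ^ (2*α+1)

/-!
Write `g = τ_y 1_{[N-1,N)}`. On `[|x-y|, x+y]` the density `K_α(x,y,z) z^(2α+1)` equals
`C_Γ P^(α-1/2) z / (xy)^(2α)` with `P = (z² - (x-y)²)((x+y)² - z²)`, and `P ≤ (2xy)²`, while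
`P ≤ N²(x+y)²` when `z ≤ N`. Integrating over a set of length `≤ min 1 (2 min x y)` gives
`g ≲ 1`, `g ≲ N/(xy)` and `g ≲ (N(x+y)/(xy))^(2α-1) N/(xy)`.

Since `g x = 0` unless `|x-y| < N ≤ x+y+1`, only `O(min N (1+y))` cells `I_m` meet the support,
and `ω_m ≤ (m+1)^(2α+1)`. If `4y < N` these cells lie below `3N` and `g ≲ 1/(1+y)`; if `N ≤ 4y`
the third bound gives `(m+1)^(2α+1) g ≲ N^(2α)` on each cell. In both cases the amalgam norm is
`≲ N^(2α+1) ≲ ω_N`.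
-/

local notation "𝟙[" N "]" => Set.indicator (Set.Ico (N - 1) N) (1 : ℝ → ℝ)

lemma CGamma_pos {α : ℝ} (hα : -1/2 < α) : 0 < CGamma α := by
  have h₁ : 0 < Real.Gamma (α + 1) := Real.Gamma_pos_of_pos (by linarith)
  have h₂ : 0 < Real.Gamma (1/2) := Real.Gamma_pos_of_pos (by norm_num)
  have h₃ : 0 < Real.Gamma (α + 1/2) := Real.Gamma_pos_of_pos (by linarith)
  unfold CGamma
  positivity

lemma sq_mem_Icc_of_mem_Ioc {x y z : ℝ} (hz : z ∈ Ioc |x - y| (x + y)) :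
    z^2 ∈ Icc ((x-y)^2) ((x+y)^2) :=
  ⟨by rw [← sq_abs]; exact pow_le_pow_left₀ (abs_nonneg _) hz.1.le 2,
    pow_le_pow_left₀ ((abs_nonneg _).trans hz.1.le) hz.2 2⟩

lemma abs_Kker_mul_rpow_le {α x y z Q : ℝ} (hα : 1/2 ≤ α) (hx : 0 < x) (hy : 0 < y)
    (hz : z ∈ Ioc |x - y| (x + y)) (hQ : 0 ≤ Q)
    (hP : (z^2 - (x-y)^2) * ((x+y)^2 - z^2) ≤ Q^2) :
    |Kker α x y z * z ^ (2*α+1)| ≤ CGamma α * (Q / (x*y)) ^ (2*α-1) * (z / (x*y)) := by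
  have hz₀ : 0 < z := (abs_nonneg _).trans_lt hz.1
  have hxy : 0 < x * y := mul_pos hx hy
  have hP₀ : 0 ≤ (z^2 - (x-y)^2) * ((x+y)^2 - z^2) := by
    obtain ⟨h₁, h₂⟩ := sq_mem_Icc_of_mem_Ioc hz
    exact mul_nonneg (by linarith) (by linarith)
  have hCG := (CGamma_pos (by linarith : -1/2 < α)).le
  have hpow : ((z^2 - (x-y)^2) * ((x+y)^2 - z^2)) ^ (α - 1/2) ≤ Q ^ (2*α-1) :=
    calc _ ≤ (Q^2) ^ (α - 1/2) := rpow_le_rpow hP₀ hP (by linarith)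
      _ = Q ^ (2*α-1) := by rw [← Real.rpow_natCast, ← Real.rpow_mul hQ]; norm_num; ring_nf
  have hKker : Kker α x y z * z ^ (2*α+1) = CGamma α *
      (((z^2 - (x-y)^2) * ((x+y)^2 - z^2)) ^ (α - 1/2) / (x*y) ^ (2*α-1)) * (z / (x*y)) := by
    rw [Kker, Real.mul_rpow hxy.le hz₀.le, Real.rpow_add hz₀, Real.rpow_one,
      Real.rpow_sub_one hxy.ne']
    have : z ^ (2*α) ≠ 0 := (rpow_pos_of_pos hz₀ _).ne'
    field_simp
  rw [hKker, Real.div_rpow hQ hxy.le, abs_of_nonneg (by positivity)]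
  gcongr

lemma norm_tau_indicator_le_mul_min {α N x y M : ℝ} (hx : 0 < x) (hy : 0 < y) (hM : 0 ≤ M)
    (hK : ∀ z ∈ Ioc |x - y| (x + y) ∩ Ico (N - 1) N, |Kker α x y z * z ^ (2*α+1)| ≤ M) :
    ‖tau α y 𝟙[N] x‖ ≤ M * min 1 (2 * min x y) := by
  have hle : |x - y| ≤ x + y := abs_le.2 ⟨by linarith, by linarith⟩
  have hind : (fun z => (Kker α x y z * z ^ (2*α+1)) • 𝟙[N] z) =
      (Ico (N - 1) N).indicator fun z => Kker α x y z * z ^ (2*α+1) := by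
    ext z; by_cases hz : z ∈ Ico (N - 1) N <;> simp [hz]
  rw [tau, if_neg hy.ne', if_neg hx.ne', intervalIntegral.integral_of_le hle, hind,
    setIntegral_indicator measurableSet_Ico]
  have hfin : volume (Ioc |x - y| (x + y) ∩ Ico (N - 1) N) < ⊤ :=
    (measure_mono inter_subset_right).trans_lt measure_Ico_lt_top
  refine (norm_setIntegral_le_of_norm_le_const hfin hK).trans ?_
  gcongr
  refine le_min ?_ ?_
  · calc _ ≤ volume.real (Ico (N - 1) N) :=
          measureReal_mono inter_subset_right measure_Ico_lt_top.ne
      _ = 1 := by rw [Real.volume_real_Ico_of_le (by linarith)]; ring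
  · calc _ ≤ volume.real (Ioc |x - y| (x + y)) :=
          measureReal_mono inter_subset_left measure_Ioc_lt_top.ne
      _ = 2 * min x y := by
        rw [Real.volume_real_Ioc_of_le hle]
        rcases le_total x y with h | h
        · rw [abs_of_nonpos (by linarith), min_eq_left h]; ring
        · rw [abs_of_nonneg (by linarith), min_eq_right h]; ring

lemma norm_tau_indicator_le_of_sq_le {α N x y Q : ℝ} (hα : 1/2 ≤ α) (hN : 0 ≤ N)
    (hx : 0 < x) (hy : 0 < y) (hQ : 0 ≤ Q)
    (hP : ∀ z ∈ Ioc |x - y| (x + y) ∩ Ico (N - 1) N,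
      (z^2 - (x-y)^2) * ((x+y)^2 - z^2) ≤ Q^2) :
    ‖tau α y 𝟙[N] x‖ ≤
      CGamma α * (Q / (x*y)) ^ (2*α-1) * (min N (x + y) / (x*y)) * min 1 (2 * min x y) := by
  have hCG := (CGamma_pos (by linarith : -1/2 < α)).le
  have hxy : 0 < x * y := mul_pos hx hy
  refine norm_tau_indicator_le_mul_min hx hy (by positivity) fun z hz => ?_
  refine (abs_Kker_mul_rpow_le hα hx hy hz.1 hQ (hP z hz)).trans ?_
  gcongr
  exact le_min hz.2.2.le hz.1.2

lemma norm_tau_indicator_le_two_rpow {α N x y : ℝ} (hα : 1/2 ≤ α) (hN : 0 ≤ N)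
    (hx : 0 < x) (hy : 0 < y) :
    ‖tau α y 𝟙[N] x‖ ≤
      CGamma α * 2 ^ (2*α-1) * (min N (x + y) / (x*y)) * min 1 (2 * min x y) := by
  have h := norm_tau_indicator_le_of_sq_le (Q := 2 * (x*y)) hα hN hx hy (by positivity)
    -- `P = (2xy)² - (z² - x² - y²)²`
    fun z _ => by nlinarith [sq_nonneg (z^2 - x^2 - y^2)]
  rwa [mul_div_assoc, div_self (mul_pos hx hy).ne', mul_one] at h

lemma norm_tau_indicator_le_four_mul {α N x y : ℝ} (hα : 1/2 ≤ α) (hN : 0 ≤ N)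
    (hx : 0 < x) (hy : 0 < y) :
    ‖tau α y 𝟙[N] x‖ ≤ 4 * (CGamma α * 2 ^ (2*α-1)) := by
  have hCG := (CGamma_pos (by linarith : -1/2 < α)).le
  have hxy : 0 < x * y := mul_pos hx hy
  have hmin : (x + y) * (2 * min x y) ≤ 4 * (x*y) := by
    rcases le_total x y with h | h
    · rw [min_eq_left h]; nlinarith
    · rw [min_eq_right h]; nlinarith
  calc _ ≤ CGamma α * 2 ^ (2*α-1) * ((x + y) / (x*y)) * (2 * min x y) := by
        refine (norm_tau_indicator_le_two_rpow hα hN hx hy).trans ?_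
        gcongr
        exacts [min_le_right _ _, min_le_right _ _]
    _ = CGamma α * 2 ^ (2*α-1) * ((x + y) * (2 * min x y) / (x*y)) := by ring
    _ ≤ CGamma α * 2 ^ (2*α-1) * (4 * (x*y) / (x*y)) := by gcongr
    _ = 4 * (CGamma α * 2 ^ (2*α-1)) := by rw [mul_div_assoc, div_self hxy.ne']; ring

lemma norm_tau_indicator_le_div {α N x y : ℝ} (hα : 1/2 ≤ α) (hN : 0 ≤ N)
    (hx : 0 < x) (hy : 0 < y) :
    ‖tau α y 𝟙[N] x‖ ≤ CGamma α * 2 ^ (2*α-1) * (N / (x*y)) := by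
  have hCG := (CGamma_pos (by linarith : -1/2 < α)).le
  refine (norm_tau_indicator_le_two_rpow hα hN hx hy).trans ?_
  calc _ ≤ CGamma α * 2 ^ (2*α-1) * (N / (x*y)) * 1 := by
        gcongr
        exacts [min_le_left _ _, min_le_left _ _]
    _ = _ := mul_one _

lemma norm_tau_indicator_le_max {α N x y : ℝ} (hα : 1/2 ≤ α) (hN : 0 ≤ N)
    (hx : 0 ≤ x) (hy : 0 ≤ y) :
    ‖tau α y 𝟙[N] x‖ ≤ max 1 (4 * (CGamma α * 2 ^ (2*α-1))) := by
  have hind : ∀ t, ‖𝟙[N] t‖ ≤ 1 := fun t => by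
    by_cases ht : t ∈ Ico (N - 1) N <;> simp [ht]
  rcases hy.eq_or_lt with rfl | hy
  · rw [tau, if_pos rfl]; exact (hind x).trans (le_max_left _ _)
  rcases hx.eq_or_lt with rfl | hx
  · rw [tau, if_neg hy.ne', if_pos rfl]; exact (hind y).trans (le_max_left _ _)
  exact (norm_tau_indicator_le_four_mul hα hN hx hy).trans (le_max_right _ _)

lemma norm_tau_indicator_le_rpow_mul_add {α N x y : ℝ} (hα : 1/2 ≤ α) (hN : 0 ≤ N)
    (hx : 0 < x) (hy : 0 < y) :
    ‖tau α y 𝟙[N] x‖ ≤ CGamma α * (N * (x + y) / (x*y)) ^ (2*α-1) * (N / (x*y)) := by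
  have hCG := (CGamma_pos (by linarith : -1/2 < α)).le
  have hxy : 0 < x * y := mul_pos hx hy
  refine (norm_tau_indicator_le_of_sq_le (Q := N * (x + y)) hα hN hx hy (by positivity)
    fun z hz => ?_).trans ?_
  · obtain ⟨h₁, h₂⟩ := sq_mem_Icc_of_mem_Ioc hz.1
    have h₃ : z^2 ≤ N^2 := pow_le_pow_left₀ ((abs_nonneg _).trans hz.1.1.le) hz.2.2.le 2
    rw [mul_pow]
    exact mul_le_mul (by nlinarith) (by nlinarith) (by linarith) (sq_nonneg N)
  · calc _ ≤ CGamma α * (N * (x + y) / (x*y)) ^ (2*α-1) * (N / (x*y)) * 1 := by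
          gcongr
          exacts [min_le_left _ _, min_le_left _ _]
      _ = _ := mul_one _

lemma tau_indicator_eq_zero {α N x y : ℝ} (hx : 0 ≤ x) (hy : 0 ≤ y)
    (h : x + y < N - 1 ∨ N ≤ |x - y|) : tau α y 𝟙[N] x = 0 := by
  have hout : ∀ z, |x - y| ≤ z → z ≤ x + y → z ∉ Ico (N - 1) N := by
    rintro z hz₁ hz₂ ⟨hN₁, hN₂⟩
    rcases h with h | h <;> linarith
  unfold tau
  split_ifs with hy₀ hx₀
  · subst hy₀
    exact indicator_of_notMem (hout x (by simp [abs_of_nonneg hx]) (by simp)) _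
  · subst hx₀
    exact indicator_of_notMem (hout y (by simp [abs_of_nonneg hy]) (by simp)) _
  · have hle : |x - y| ≤ x + y := abs_le.2 ⟨by linarith, by linarith⟩
    rw [intervalIntegral.integral_congr (g := fun _ => (0:ℝ)), intervalIntegral.integral_zero]
    intro z hz
    rw [uIcc_of_le hle] at hz
    simp [indicator_of_notMem (hout z hz.1 hz.2)]

section Amalgam

variable {E : Type*} [NormedAddCommGroup E]

lemma amalgamNorm_top_one (α : ℝ) (f : ℝ → E) :
    amalgamNorm α ⊤ 1 f = ∑' m, wn α m * ⨆ x ∈ In m, ‖f x‖ₑ := by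
  simp [amalgamNorm, enorm]

lemma wn_le_rpow {α : ℝ} (hα : 0 ≤ 2*α+1) (m : ℕ) :
    wn α m ≤ ENNReal.ofReal (((m:ℝ) + 1) ^ (2*α+1)) := by
  rw [wn, In, omegaM, withDensity_apply _ measurableSet_Ico]
  calc ∫⁻ z in Ico (m:ℝ) (m + 1), ENNReal.ofReal (z ^ (2*α+1)) ∂volume.restrict (Ioi 0)
      ≤ ∫⁻ _ in Ico (m:ℝ) (m + 1), ENNReal.ofReal (((m:ℝ) + 1) ^ (2*α+1))
          ∂volume.restrict (Ioi 0) :=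
        setLIntegral_mono' measurableSet_Ico fun z hz => ENNReal.ofReal_le_ofReal <|
          Real.rpow_le_rpow ((Nat.cast_nonneg m).trans hz.1) hz.2.le hα
    _ = ENNReal.ofReal (((m:ℝ) + 1) ^ (2*α+1)) * volume.restrict (Ioi 0) (Ico (m:ℝ) (m + 1)) :=
        setLIntegral_const _ _
    _ ≤ ENNReal.ofReal (((m:ℝ) + 1) ^ (2*α+1)) * 1 := by
        gcongr
        calc volume.restrict (Ioi 0) (Ico (m:ℝ) (m + 1)) ≤ volume (Ico (m:ℝ) (m + 1)) :=
              Measure.restrict_apply_le _ _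
          _ = 1 := by simp
    _ = _ := mul_one _

lemma wn_mul_iSup_le {α a b B : ℝ} (hα : 0 ≤ 2*α+1) {f : ℝ → E}
    (hf : ∀ x, 0 ≤ x → x ∉ Ico a b → f x = 0)
    (hcell : ∀ (m : ℕ) x, x ∈ In m → x ∈ Ico a b → ((m:ℝ) + 1) ^ (2*α+1) * ‖f x‖ ≤ B)
    (m : ℕ) : wn α m * ⨆ x ∈ In m, ‖f x‖ₑ ≤ ENNReal.ofReal B := by
  refine (mul_le_mul_left (wn_le_rpow hα m) _).trans ?_
  simp only [ENNReal.mul_iSup]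
  refine iSup₂_le fun x hx => ?_
  by_cases hxab : x ∈ Ico a b
  · rw [← ofReal_norm, ← ENNReal.ofReal_mul (by positivity)]
    exact ENNReal.ofReal_le_ofReal (hcell m x hx hxab)
  · simp [hf x ((Nat.cast_nonneg m).trans hx.1) hxab]

lemma iSup_In_eq_zero {a b : ℝ} {f : ℝ → E} (hf : ∀ x, 0 ≤ x → x ∉ Ico a b → f x = 0)
    {m : ℕ} (hm : m ∉ Finset.Ico ⌊a⌋₊ (⌊b⌋₊ + 1)) : ⨆ x ∈ In m, ‖f x‖ₑ = 0 := by
  refine le_antisymm (iSup₂_le fun x hx => ?_) bot_le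
  suffices hxab : x ∉ Ico a b by simp [hf x ((Nat.cast_nonneg m).trans hx.1) hxab]
  intro hxab
  refine hm ?_
  have h₁ : (m:ℝ) < b := hx.1.trans_lt hxab.2
  have h₂ : a < (m:ℝ) + 1 := hxab.1.trans_lt hx.2
  exact Finset.mem_Ico.2 ⟨Nat.lt_succ_iff.1 ((Nat.floor_lt' m.succ_ne_zero).2 (by simpa using h₂)),
    Nat.lt_succ_of_le (Nat.le_floor h₁.le)⟩

lemma card_Ico_floor_le {a b : ℝ} (hb : 0 ≤ b) (hab : a ≤ b) :
    ((Finset.Ico ⌊a⌋₊ (⌊b⌋₊ + 1)).card : ℝ) ≤ b - a + 2 := by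
  rw [Nat.card_Ico]
  have hfb : (⌊b⌋₊ : ℝ) ≤ b := Nat.floor_le hb
  have hfa : a - 1 < (⌊a⌋₊ : ℝ) := Nat.sub_one_lt_floor a
  rcases le_total ⌊a⌋₊ (⌊b⌋₊ + 1) with h | h
  · rw [Nat.cast_sub h]; push_cast; linarith
  · rw [Nat.sub_eq_zero_of_le h]; push_cast; linarith

lemma amalgamNorm_top_one_le_of_support {α a b B : ℝ} (hα : 0 ≤ 2*α+1) (hb : 0 ≤ b)
    (hab : a ≤ b) (hB : 0 ≤ B) {f : ℝ → E} (hf : ∀ x, 0 ≤ x → x ∉ Ico a b → f x = 0)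
    (hcell : ∀ (m : ℕ) x, x ∈ In m → x ∈ Ico a b → ((m:ℝ) + 1) ^ (2*α+1) * ‖f x‖ ≤ B) :
    amalgamNorm α ⊤ 1 f ≤ ENNReal.ofReal ((b - a + 2) * B) := by
  rw [amalgamNorm_top_one, tsum_eq_sum (s := Finset.Ico ⌊a⌋₊ (⌊b⌋₊ + 1))
    fun m hm => by rw [iSup_In_eq_zero hf hm, mul_zero]]
  calc _ ≤ ∑ _m ∈ Finset.Ico ⌊a⌋₊ (⌊b⌋₊ + 1), ENNReal.ofReal B :=
        Finset.sum_le_sum fun m _ => wn_mul_iSup_le hα hf hcell m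
    _ = ENNReal.ofReal ((Finset.Ico ⌊a⌋₊ (⌊b⌋₊ + 1)).card * B) := by
        rw [Finset.sum_const, nsmul_eq_mul, ENNReal.ofReal_mul (Nat.cast_nonneg _),
          ENNReal.ofReal_natCast]
    _ ≤ _ := ENNReal.ofReal_le_ofReal (by gcongr; exact card_Ico_floor_le hb hab)

end Amalgam

lemma norm_tau_indicator_le_of_four_mul_lt {α N x y : ℝ} (hα : 1/2 ≤ α) (hN : 1 ≤ N)
    (hy : 0 ≤ y) (hyN : 4 * y < N) (hx₀ : 0 ≤ x) (hx : N - 1 - y ≤ x) :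
    ‖tau α y 𝟙[N] x‖ ≤ 2 * max 1 (4 * (CGamma α * 2 ^ (2*α-1))) / (1 + y) := by
  have hCG := (CGamma_pos (by linarith : -1/2 < α)).le
  set c := CGamma α * 2 ^ (2*α-1)
  rcases le_or_gt y 1 with hy₁ | hy₁
  · refine (norm_tau_indicator_le_max hα (by linarith) hx₀ hy).trans ?_
    rw [le_div_iff₀ (by linarith)]
    nlinarith [le_max_left 1 (4 * c)]
  · have hxN : N / 2 ≤ x := by linarith
    calc ‖tau α y 𝟙[N] x‖ ≤ c * (N / (x * y)) :=
          norm_tau_indicator_le_div hα (by linarith) (by linarith) (by linarith)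
      _ ≤ c * (N / (N / 2 * y)) := by gcongr
      _ = 4 * c / (2 * y) := by field_simp; ring
      _ ≤ 2 * max 1 (4 * c) / (1 + y) := by
          rw [div_le_div_iff₀ (by linarith) (by linarith)]
          nlinarith [le_max_right 1 (4 * c), le_max_left 1 (4 * c)]

lemma rpow_mul_norm_tau_indicator_le_of_le_four_mul {α N x y : ℝ} (hα : 1/2 ≤ α) (hN : 1 ≤ N)
    (hyN : N ≤ 4 * y) (hx : 0 ≤ x) (hxy : x < y + N) {m : ℕ} (hm : x ∈ In m) :
    ((m:ℝ) + 1) ^ (2*α+1) * ‖tau α y 𝟙[N] x‖ ≤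
      max (max 1 (4 * (CGamma α * 2 ^ (2*α-1)))) (20 * CGamma α * 12 ^ (2*α-1)) *
        N ^ (2*α) := by
  have hCG := (CGamma_pos (by linarith : -1/2 < α)).le
  have hNα : 1 ≤ N ^ (2*α) := Real.one_le_rpow hN (by linarith)
  have hy : 0 < y := by linarith
  rcases lt_or_ge x 1 with hx₁ | hx₁
  · have hm₀ : m = 0 := by exact_mod_cast Nat.lt_one_iff.1 (by exact_mod_cast hm.1.trans_lt hx₁)
    subst hm₀
    rw [Nat.cast_zero, zero_add, Real.one_rpow, one_mul]
    calc ‖tau α y 𝟙[N] x‖ ≤ max 1 (4 * (CGamma α * 2 ^ (2*α-1))) :=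
          norm_tau_indicator_le_max hα (by linarith) hx hy.le
      _ ≤ _ := (le_max_left _ _).trans (le_mul_of_one_le_right (by positivity) hNα)
  · have hx₀ : 0 < x := by linarith
    calc ((m:ℝ) + 1) ^ (2*α+1) * ‖tau α y 𝟙[N] x‖
        ≤ (2 * x) ^ (2*α+1) * (CGamma α * (N * (x + y) / (x*y)) ^ (2*α-1) * (N / (x*y))) := by
          gcongr
          · linarith [hm.1]
          · exact norm_tau_indicator_le_rpow_mul_add hα (by linarith) hx₀ hy
      _ = CGamma α * (2 * x * (N * (x + y) / (x*y))) ^ (2*α-1) * ((2 * x) ^ 2 * (N / (x*y))) := by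
          rw [show 2*α+1 = (2*α-1) + 2 by ring, Real.rpow_add (by positivity), Real.rpow_two,
            Real.mul_rpow (x := 2 * x) (by positivity) (by positivity)]
          ring
      _ = CGamma α * (2 * N * (x + y) / y) ^ (2*α-1) * (4 * N * x / y) := by
          rw [show 2 * x * (N * (x + y) / (x*y)) = 2 * N * (x + y) / y by field_simp,
            show (2 * x) ^ 2 * (N / (x*y)) = 4 * N * x / y by field_simp; ring]
      _ ≤ CGamma α * (12 * N) ^ (2*α-1) * (20 * N) := by
          have h₁ : 2 * N * (x + y) / y ≤ 12 * N := by rw [div_le_iff₀ hy]; nlinarith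
          have h₂ : 4 * N * x / y ≤ 20 * N := by rw [div_le_iff₀ hy]; nlinarith
          gcongr
          linarith
      _ = 20 * CGamma α * 12 ^ (2*α-1) * N ^ (2*α) := by
          rw [Real.mul_rpow (by norm_num) (by linarith), Real.rpow_sub_one (by linarith : N ≠ 0)]
          field_simp
      _ ≤ _ := by gcongr; exact le_max_right _ _

lemma amalgamNorm_tau_indicator_le_of_four_mul_lt {α : ℝ} (hα : 1/2 ≤ α) :
    ∃ K, ∀ N y : ℝ, 1 ≤ N → 0 ≤ y → 4 * y < N →
      amalgamNorm α ⊤ 1 (tau α y 𝟙[N]) ≤ ENNReal.ofReal (K * N ^ (2*α+1)) := by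
  set c₁ := max 1 (4 * (CGamma α * 2 ^ (2*α-1)))
  refine ⟨6 * c₁ * 3 ^ (2*α+1), fun N y hN hy hyN => ?_⟩
  have hc₁ : 0 < c₁ := lt_of_lt_of_le one_pos (le_max_left _ _)
  calc _ ≤ ENNReal.ofReal
        (((N + y) - (N - 1 - y) + 2) * ((3 * N) ^ (2*α+1) * (2 * c₁ / (1 + y)))) := by
        refine amalgamNorm_top_one_le_of_support (by linarith) (by linarith) (by linarith)
          (by positivity) (fun x hx hxI => tau_indicator_eq_zero hx hy ?_) fun m x hm hxI => ?_
        · rcases lt_or_ge x (N - 1 - y) with h | h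
          · left; linarith
          · right
            have : N + y ≤ x := not_lt.1 fun h' => hxI ⟨h, h'⟩
            exact le_abs.2 (Or.inl (by linarith))
        · refine mul_le_mul (Real.rpow_le_rpow (by positivity) (by linarith [hm.1, hxI.2])
            (by linarith)) (norm_tau_indicator_le_of_four_mul_lt hα hN hy hyN
            ((Nat.cast_nonneg m).trans hm.1) hxI.1) (norm_nonneg _) (by positivity)
    _ ≤ ENNReal.ofReal (3 * (1 + y) * ((3 * N) ^ (2*α+1) * (2 * c₁ / (1 + y)))) := by
        gcongr
        linarith
    _ = _ := by
        rw [Real.mul_rpow (by norm_num) (by linarith)]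
        congr 1
        field_simp
        ring

lemma amalgamNorm_tau_indicator_le_of_le_four_mul {α : ℝ} (hα : 1/2 ≤ α) :
    ∃ K, ∀ N y : ℝ, 1 ≤ N → N ≤ 4 * y →
      amalgamNorm α ⊤ 1 (tau α y 𝟙[N]) ≤ ENNReal.ofReal (K * N ^ (2*α+1)) := by
  set K := max (max 1 (4 * (CGamma α * 2 ^ (2*α-1)))) (20 * CGamma α * 12 ^ (2*α-1))
  refine ⟨4 * K, fun N y hN hyN => ?_⟩
  have hK : 0 < K := lt_of_lt_of_le one_pos ((le_max_left _ _).trans (le_max_left _ _))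
  calc _ ≤ ENNReal.ofReal (((y + N) - (y - N) + 2) * (K * N ^ (2*α))) := by
        refine amalgamNorm_top_one_le_of_support (by linarith) (by linarith) (by linarith)
          (by positivity) (fun x hx hxI => tau_indicator_eq_zero hx (by linarith) ?_)
          fun m x hm hxI => ?_
        · refine Or.inr (not_lt.1 fun h => hxI ?_)
          obtain ⟨h₁, h₂⟩ := abs_sub_lt_iff.1 h
          exact ⟨by linarith, by linarith⟩
        · exact rpow_mul_norm_tau_indicator_le_of_le_four_mul hα hN hyN
            ((Nat.cast_nonneg m).trans hm.1) (by linarith [hxI.2]) hm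
    _ ≤ _ := by
        refine ENNReal.ofReal_le_ofReal ?_
        rw [Real.rpow_add_one (by linarith : N ≠ 0)]
        have : 0 ≤ K * N ^ (2*α) := by positivity
        nlinarith

lemma exists_amalgamNorm_tau_indicator_le {α : ℝ} (hα : 1/2 ≤ α) :
    ∃ K, 0 < K ∧ ∀ N y : ℝ, 1 ≤ N → 0 ≤ y →
      amalgamNorm α ⊤ 1 (tau α y 𝟙[N]) ≤ ENNReal.ofReal (K * N ^ (2*α+1)) := by
  obtain ⟨K₁, h₁⟩ := amalgamNorm_tau_indicator_le_of_four_mul_lt hα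
  obtain ⟨K₂, h₂⟩ := amalgamNorm_tau_indicator_le_of_le_four_mul hα
  refine ⟨max (max K₁ K₂) 1, by positivity, fun N y hN hy => ?_⟩
  have hNp : 0 ≤ N ^ (2*α+1) := by positivity
  rcases lt_or_ge (4 * y) N with hyN | hyN
  · refine (h₁ N y hN hy hyN).trans (ENNReal.ofReal_le_ofReal ?_)
    gcongr
    exact (le_max_left _ _).trans (le_max_left _ _)
  · refine (h₂ N y hN hyN).trans (ENNReal.ofReal_le_ofReal ?_)
    gcongr
    exact (le_max_right _ _).trans (le_max_left _ _)

lemma ofReal_half_rpow_le_omegaM_Ico {α N : ℝ} (hα : 0 ≤ 2*α+1) (hN : 1 ≤ N) :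
    ENNReal.ofReal ((N / 2) ^ (2*α+1) / 2) ≤ omegaM α (Ico (N - 1) N) := by
  have hsub : Ico (N - 1/2) N ⊆ Ioi 0 := fun z hz => by simp only [mem_Ioi]; linarith [hz.1]
  calc ENNReal.ofReal ((N / 2) ^ (2*α+1) / 2)
      = ENNReal.ofReal ((N / 2) ^ (2*α+1)) * volume (Ico (N - 1/2) N) := by
        rw [Real.volume_Ico, ← ENNReal.ofReal_mul (by positivity)]
        ring_nf
    _ = ∫⁻ _ in Ico (N - 1/2) N, ENNReal.ofReal ((N / 2) ^ (2*α+1)) :=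
        (setLIntegral_const _ _).symm
    _ ≤ ∫⁻ z in Ico (N - 1/2) N, ENNReal.ofReal (z ^ (2*α+1)) :=
        setLIntegral_mono' measurableSet_Ico fun z hz => ENNReal.ofReal_le_ofReal <|
          Real.rpow_le_rpow (by positivity) (by linarith [hz.1]) hα
    _ = omegaM α (Ico (N - 1/2) N) := by
        rw [omegaM, withDensity_apply _ measurableSet_Ico,
          Measure.restrict_restrict measurableSet_Ico, inter_eq_left.2 hsub]
    _ ≤ omegaM α (Ico (N - 1) N) := measure_mono (Ico_subset_Ico (by linarith) le_rfl)

/-- Key reduction for the `(L^∞, ℓ¹)` translation bound: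
`‖τ_y 1_{[n-1,n)}‖_{∞,1} ≤ C·ω_n`, uniformly in `n ≥ 1` and `y ≥ 0`. -/
theorem translation_indicator_bound (α : ℝ) (hα : 1/2 ≤ α) :
    ∃ C : ℝ, 0 < C ∧ ∀ n : ℕ, 1 ≤ n → ∀ y : ℝ, 0 ≤ y →
      amalgamNorm α ⊤ 1 (tau α y ((Set.Ico ((n:ℝ)-1) (n:ℝ)).indicator (1 : ℝ → ℝ))) ≤
        ENNReal.ofReal C * omegaM α (Set.Ico ((n:ℝ)-1) (n:ℝ)) := by
  obtain ⟨K, hK, hbound⟩ := exists_amalgamNorm_tau_indicator_le hα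
  refine ⟨K * 2 ^ (2*α+2), by positivity, fun n hn y hy => ?_⟩
  have hN : (1:ℝ) ≤ n := by exact_mod_cast hn
  calc _ ≤ ENNReal.ofReal (K * (n:ℝ) ^ (2*α+1)) := hbound n y hN hy
    _ = ENNReal.ofReal (K * 2 ^ (2*α+2)) * ENNReal.ofReal (((n:ℝ) / 2) ^ (2*α+1) / 2) := by
        have h₂ : (2:ℝ) ^ (2*α+2) = 2 ^ (2*α+1) * 2 := by
          rw [← Real.rpow_add_one two_ne_zero]; ring_nf
        rw [← ENNReal.ofReal_mul (by positivity), Real.div_rpow (by positivity) zero_le_two, h₂]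
        field_simp
    _ ≤ _ := by gcongr; exact ofReal_half_rpow_le_omegaM_Ico (by linarith) hN
end
end

section
/- Pointwise bound at exceptional indices: for every integer n ≥ 1 and all x, y > 0 with |x − y| ≥ n − 1, one has τ_y 1_{[n−1,n)}(x) ≤ C_Γ·4^{α−1/2}·n·(2n−1)^{α−1/2}·(xy)^{−(α+1/2)}. -/
open MeasureTheory Real Set ENNReal ComplexOrder

noncomputable section

/-! On the support `(|x - y|, x + y] ∩ [n - 1, n)` of the integrand, the two factors of the
kernel polynomial are bounded separately: `z² - (x - y)² ≤ n² - (n - 1)² = 2n - 1` and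
`(x + y)² - z² ≤ (x + y)² - (x - y)² = 4xy`, while `z < n`. With `α - 1/2 ≥ 0` this bounds the
integrand by the right-hand side, and the support has length at most `1`. -/

lemma CGamma_nonneg {α : ℝ} (hα : -1/2 < α) : 0 ≤ CGamma α := by
  have := Real.Gamma_pos_of_pos (show 0 < α + 1 by linarith)
  have := Real.Gamma_pos_of_pos (show (0:ℝ) < 1/2 by norm_num)
  have := Real.Gamma_pos_of_pos (show 0 < α + 1/2 by linarith)
  unfold CGamma
  positivity

section Kernel

variable {α x y z : ℝ}

lemma Kker_mul_rpow_eq (hx : 0 < x) (hy : 0 < y) (hz : 0 < z) :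
    Kker α x y z * z ^ (2*α+1) =
      CGamma α * ((z^2 - (x-y)^2) * ((x+y)^2 - z^2)) ^ (α - 1/2) * z * (x*y) ^ (-(2*α)) := by
  rw [Kker, Real.mul_rpow (mul_pos hx hy).le hz.le, Real.rpow_add hz, Real.rpow_one,
    Real.rpow_neg (mul_pos hx hy).le]
  have := Real.rpow_pos_of_pos hz (2*α)
  field_simp

lemma kernel_poly_nonneg (h1 : |x - y| ≤ z) (h2 : z ≤ x + y) :
    0 ≤ (z^2 - (x-y)^2) * ((x+y)^2 - z^2) := by
  have : (x-y)^2 ≤ z^2 := by rw [← sq_abs]; gcongr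
  have : z^2 ≤ (x+y)^2 := by gcongr; exact (abs_nonneg _).trans h1
  apply mul_nonneg <;> linarith

lemma kernel_poly_le {m : ℝ} (hm : 1 ≤ m) (h : m - 1 ≤ |x - y|) (h1 : |x - y| ≤ z)
    (h2 : z ≤ x + y) (hzm : z ≤ m) :
    (z^2 - (x-y)^2) * ((x+y)^2 - z^2) ≤ (2*m - 1) * (4*(x*y)) := by
  have hz : 0 ≤ z := (abs_nonneg _).trans h1
  have hP : z^2 - (x-y)^2 ≤ 2*m - 1 := by
    have : (m-1)^2 ≤ (x-y)^2 := by rw [← sq_abs (x-y)]; gcongr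
    nlinarith
  have hQ : (x+y)^2 - z^2 ≤ 4*(x*y) := by
    have : (x-y)^2 ≤ z^2 := by rw [← sq_abs]; gcongr
    nlinarith
  have hQ0 : 0 ≤ (x+y)^2 - z^2 := by nlinarith
  exact mul_le_mul hP hQ hQ0 (by linarith)

lemma Kker_mul_rpow_nonneg (hα : -1/2 < α) (hx : 0 < x) (hy : 0 < y) (h1 : |x - y| < z)
    (h2 : z ≤ x + y) : 0 ≤ Kker α x y z * z ^ (2*α+1) := by
  have hz : 0 < z := (abs_nonneg _).trans_lt h1
  rw [Kker_mul_rpow_eq hx hy hz]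
  have := Real.rpow_nonneg (kernel_poly_nonneg h1.le h2) (α - 1/2)
  have := CGamma_nonneg hα
  positivity

lemma Kker_mul_rpow_le (hα : 1/2 ≤ α) (hx : 0 < x) (hy : 0 < y) {m : ℝ} (hm : 1 ≤ m)
    (h : m - 1 ≤ |x - y|) (h1 : |x - y| < z) (h2 : z ≤ x + y) (hzm : z ≤ m) :
    Kker α x y z * z ^ (2*α+1) ≤
      CGamma α * (4:ℝ) ^ (α - 1/2) * m * (2*m - 1) ^ (α - 1/2) * (x*y) ^ (-(α + 1/2)) := by
  have hz : 0 < z := (abs_nonneg _).trans_lt h1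
  have hxy : 0 < x*y := mul_pos hx hy
  have := CGamma_nonneg (show -1/2 < α by linarith)
  rw [Kker_mul_rpow_eq hx hy hz]
  have hpoly : ((z^2 - (x-y)^2) * ((x+y)^2 - z^2)) ^ (α - 1/2) ≤
      ((2*m - 1) * (4*(x*y))) ^ (α - 1/2) :=
    Real.rpow_le_rpow (kernel_poly_nonneg h1.le h2) (kernel_poly_le hm h h1.le h2 hzm)
      (by linarith)
  have hm' : 0 ≤ 2*m - 1 := by linarith
  have := Real.rpow_nonneg (mul_nonneg hm' (by positivity : 0 ≤ 4*(x*y))) (α - 1/2)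
  calc _ ≤ CGamma α * ((2*m - 1) * (4*(x*y))) ^ (α - 1/2) * m * (x*y) ^ (-(2*α)) := by
        gcongr
    _ = _ := by
        rw [Real.mul_rpow hm' (by positivity), Real.mul_rpow (by norm_num) hxy.le,
          show -(α + 1/2) = (α - 1/2) + -(2*α) by ring, Real.rpow_add hxy]
        ring

end Kernel

lemma tau_indicator_one_eq_setIntegral {α x y : ℝ} (hx : 0 < x) (hy : 0 < y) {s : Set ℝ}
    (hs : MeasurableSet s) :
    tau α y (s.indicator 1) x = ∫ z in Ioc |x - y| (x + y) ∩ s, Kker α x y z * z ^ (2*α+1) := by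
  rw [tau, if_neg hy.ne', if_neg hx.ne',
    intervalIntegral.integral_of_le (abs_sub_le_iff.2 ⟨by linarith, by linarith⟩),
    ← setIntegral_indicator hs]
  congr 1 with z
  by_cases hz : z ∈ s <;> simp [hz]

/-- Pointwise bound at exceptional indices:
`τ_y 1_{[n-1,n)}(x) ≤ C_Γ·4^{α-1/2}·n·(2n-1)^{α-1/2}·(xy)^{-(α+1/2)}`
whenever `|x - y| ≥ n - 1`. -/
theorem exceptional_index_bound (α : ℝ) (hα : 1/2 ≤ α) (n : ℕ) (hn : 1 ≤ n)
    (x y : ℝ) (hx : 0 < x) (hy : 0 < y) (h : (n:ℝ) - 1 ≤ |x - y|) :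
    tau α y ((Set.Ico ((n:ℝ)-1) (n:ℝ)).indicator (1 : ℝ → ℝ)) x ≤
      CGamma α * (4:ℝ) ^ (α - 1/2) * (n:ℝ) * (2*(n:ℝ) - 1) ^ (α - 1/2) *
        (x*y) ^ (-(α + 1/2)) := by
  have hn' : (1:ℝ) ≤ n := by exact_mod_cast hn
  set C := CGamma α * (4:ℝ) ^ (α - 1/2) * (n:ℝ) * (2*(n:ℝ) - 1) ^ (α - 1/2) *
    (x*y) ^ (-(α + 1/2))
  have hC : 0 ≤ C := by
    have := CGamma_nonneg (show -1/2 < α by linarith)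
    have := Real.rpow_nonneg (show (0:ℝ) ≤ 2*n - 1 by linarith) (α - 1/2)
    positivity
  rw [tau_indicator_one_eq_setIntegral hx hy measurableSet_Ico]
  calc _ ≤ ‖∫ z in Ioc |x - y| (x + y) ∩ Ico ((n:ℝ)-1) n, Kker α x y z * z ^ (2*α+1)‖ :=
        Real.le_norm_self _
    _ ≤ C * volume.real (Ioc |x - y| (x + y) ∩ Ico ((n:ℝ)-1) n) := by
        refine norm_setIntegral_le_of_norm_le_const
          ((measure_mono inter_subset_right).trans_lt measure_Ico_lt_top) fun z hz => ?_
        rw [Real.norm_of_nonneg (Kker_mul_rpow_nonneg (by linarith) hx hy hz.1.1 hz.1.2)]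
        exact Kker_mul_rpow_le hα hx hy hn' h hz.1.1 hz.1.2 hz.2.2.le
    _ ≤ C * volume.real (Ico ((n:ℝ)-1) n) :=
        mul_le_mul_of_nonneg_left (measureReal_mono inter_subset_right measure_Ico_lt_top.ne) hC
    _ = C := by rw [Real.volume_real_Ico_of_le (by linarith), _root_.sub_sub_cancel, mul_one]
end
end
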